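/- Let x: [t₀, t₁] → ℝ^m be continuous with ‖x(t)‖ > 0 for all t, such that t ↦ ½‖x(t)‖² is absolutely continuous and satisfies (d/dt)½‖x(t)‖² ≤ -L‖x(t)‖ almost everywhere for some L > 0. If ψ: [t₀, t₁] → ℝ is Lipschitz with constant L and ψ(t₀) - ‖x(t₀)‖ = κ, then ψ(t₁) - ‖x(t₁)‖ ≥ κ. -/

import Mathlib

/-!
Away from zero, `‖x‖ = √(2 · ½‖x‖²)` is differentiable with derivative `(d/dt ½‖x‖²) / ‖x‖ ≤ -L`,
so `‖x(t)‖ + L t` is nonincreasing: `‖x‖` drops by at least `L (t₁ - t₀)`, while the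
`L`-Lipschitz `ψ` drops by at most that much.
-/

open Set

theorem hasDerivWithinAt_of_hasDerivWithinAt_half_sq {f : ℝ → ℝ} {s : Set ℝ} {d t : ℝ}
    (hf : ∀ u ∈ s, 0 ≤ f u) (ht : 0 < f t)
    (h : HasDerivWithinAt (fun u => 1 / 2 * f u ^ 2) d s t) :
    HasDerivWithinAt f (d / f t) s t := by
  have hsqrt : HasDerivWithinAt (fun u => √(2 * (1 / 2 * f u ^ 2))) (d / f t) s t := by
    refine ((Real.hasDerivAt_sqrt (by positivity)).comp_hasDerivWithinAt t
      (h.const_mul 2)).congr_deriv ?_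
    rw [show 2 * (1 / 2 * f t ^ 2) = f t ^ 2 by ring, Real.sqrt_sq ht.le]
    field_simp
  have hsqrt_eq (u : ℝ) (hu : 0 ≤ f u) : √(2 * (1 / 2 * f u ^ 2)) = f u := by
    rw [show 2 * (1 / 2 * f u ^ 2) = f u ^ 2 by ring, Real.sqrt_sq hu]
  exact hsqrt.congr (fun u hu => (hsqrt_eq u (hf u hu)).symm) (hsqrt_eq t ht.le).symm

theorem Convex.image_sub_le_mul_sub_of_hasDerivWithinAt_le {D : Set ℝ} (hD : Convex ℝ D)
    {f f' : ℝ → ℝ} {C : ℝ} (hf : ContinuousOn f D)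
    (hf' : ∀ t ∈ interior D, HasDerivWithinAt f (f' t) (interior D) t)
    (hC : ∀ t ∈ interior D, f' t ≤ C) :
    ∀ a ∈ D, ∀ b ∈ D, a ≤ b → f b - f a ≤ C * (b - a) := by
  have hanti : AntitoneOn (fun t => f t - C * t) D :=
    antitoneOn_of_hasDerivWithinAt_nonpos hD (hf.sub (continuousOn_const.mul continuousOn_id))
      (fun t ht => ((hf' t ht).sub ((hasDerivWithinAt_id t _).const_mul C)).congr_deriv
        (by rw [mul_one]))
      (fun t ht => sub_nonpos.mpr (hC t ht))
  intro a ha b hb hab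
  linarith [hanti ha hb hab]

/-- Contradiction step of the funnel argument: if `(d/dt)½‖x(t)‖² ≤ -L‖x(t)‖` on `[t₀,t₁]`
and `ψ` is `L`-Lipschitz with `ψ(t₀) - ‖x(t₀)‖ = κ`, then `ψ(t₁) - ‖x(t₁)‖ ≥ κ`. -/
theorem funnel_contradiction_step (m : ℕ) (t₀ t₁ L κ : ℝ) (ht : t₀ ≤ t₁) (hL : 0 < L)
    (x : ℝ → EuclideanSpace ℝ (Fin m)) (f' : ℝ → ℝ)
    (hxc : ContinuousOn x (Set.Icc t₀ t₁))
    (hxpos : ∀ t ∈ Set.Icc t₀ t₁, 0 < ‖x t‖)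
    (hder : ∀ t ∈ Set.Icc t₀ t₁,
      HasDerivWithinAt (fun s => (1 / 2) * ‖x s‖ ^ 2) (f' t) (Set.Icc t₀ t₁) t)
    (hineq : ∀ t ∈ Set.Icc t₀ t₁, f' t ≤ -L * ‖x t‖)
    (ψ : ℝ → ℝ) (hψ : LipschitzOnWith (Real.toNNReal L) ψ (Set.Icc t₀ t₁))
    (hκ : ψ t₀ - ‖x t₀‖ = κ) :
    ψ t₁ - ‖x t₁‖ ≥ κ := by
  have h₀ : t₀ ∈ Icc t₀ t₁ := left_mem_Icc.mpr ht
  have h₁ : t₁ ∈ Icc t₀ t₁ := right_mem_Icc.mpr ht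
  have hnorm_deriv : ∀ t ∈ interior (Icc t₀ t₁),
      HasDerivWithinAt (fun s => ‖x s‖) (f' t / ‖x t‖) (interior (Icc t₀ t₁)) t := fun t ht =>
    (hasDerivWithinAt_of_hasDerivWithinAt_half_sq (fun u _ => norm_nonneg (x u))
      (hxpos t (interior_subset ht)) (hder t (interior_subset ht))).mono interior_subset
  have hnorm_rate : ∀ t ∈ interior (Icc t₀ t₁), f' t / ‖x t‖ ≤ -L := fun t ht =>
    (div_le_iff₀ (hxpos t (interior_subset ht))).mpr (hineq t (interior_subset ht))
  have hnorm_drop : ‖x t₁‖ - ‖x t₀‖ ≤ -L * (t₁ - t₀) :=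
    (convex_Icc t₀ t₁).image_sub_le_mul_sub_of_hasDerivWithinAt_le hxc.norm hnorm_deriv
      hnorm_rate t₀ h₀ t₁ h₁ ht
  have hψ_drop : ψ t₀ - ψ t₁ ≤ L * (t₁ - t₀) := by
    have := hψ.dist_le_mul t₀ h₀ t₁ h₁
    rw [Real.dist_eq, Real.dist_eq, abs_sub_comm t₀, abs_of_nonneg (sub_nonneg.mpr ht),
      Real.coe_toNNReal L hL.le] at this
    exact (le_abs_self _).trans this
  linarith
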